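/- Let ℓ₁, …, ℓₙ, and ℓ_a, ℓ_b be nonnegative reals and k ∈ [n] an index with Σ_{i<k} ℓ_i + ℓ_a = 1/2 and Σ_{i>k} ℓ_i + ℓ_b = 1/2. Let p₁, …, pₙ ∈ [0,1]. If Σ_{i<k} p_i ℓ_i + Σ_{i>k} (1−p_i) ℓ_i + p_k ℓ_a + (1−p_k) ℓ_b ≥ 3/4, then there exist indices i < j with |p_i − p_j| ≥ 1/2. -/

import Mathlib

open Finset

/-!
Let `i` maximise `p` on `[1, k]` and `j` minimise it on `[k, n]`. Bounding every `p x` on the left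
of the threshold by `p i` and every `1 - p x` on the right by `1 - p j`, the two halves of total
weight `1/2` give accuracy at most `(p i + (1 - p j)) / 2`. Accuracy `≥ 3/4` then forces
`p i - p j ≥ 1/2`, so in particular `i ≠ j`, and `i ≤ k ≤ j`.
-/

theorem Finset.sum_mul_add_mul_le {ι R : Type*} [Semiring R] [PartialOrder R] [IsOrderedRing R]
    {s : Finset ι} {f w : ι → R} {y a c : R} (hw : ∀ i ∈ s, 0 ≤ w i) (ha : 0 ≤ a)
    (hf : ∀ i ∈ s, f i ≤ c) (hy : y ≤ c) :
    ∑ i ∈ s, f i * w i + y * a ≤ c * (∑ i ∈ s, w i + a) := by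
  rw [mul_add, mul_sum]
  gcongr with i hi
  · exact hw i hi
  · exact hf i hi

theorem accuracy_forces_gap_general (n k : ℕ) (hk : k ∈ Finset.Icc 1 n)
    (ℓ : ℕ → ℝ) (ℓa ℓb : ℝ)
    (hℓ : ∀ i ∈ Finset.Icc 1 n, 0 ≤ ℓ i) (hℓa : 0 ≤ ℓa) (hℓb : 0 ≤ ℓb)
    (hleft : (∑ i ∈ Finset.Ico 1 k, ℓ i) + ℓa = 1 / 2)
    (hright : (∑ i ∈ Finset.Ioc k n, ℓ i) + ℓb = 1 / 2)
    (p : ℕ → ℝ)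
    (hacc : (∑ i ∈ Finset.Ico 1 k, p i * ℓ i) +
        (∑ i ∈ Finset.Ioc k n, (1 - p i) * ℓ i) +
        p k * ℓa + (1 - p k) * ℓb ≥ 3 / 4) :
    ∃ i j, i ∈ Finset.Icc 1 n ∧ j ∈ Finset.Icc 1 n ∧ i < j ∧
      |p i - p j| ≥ 1 / 2 := by
  obtain ⟨hk1, hkn⟩ := mem_Icc.1 hk
  obtain ⟨i, hi, hi_max⟩ := exists_max_image (Icc 1 k) p ⟨k, mem_Icc.2 ⟨hk1, le_rfl⟩⟩
  obtain ⟨j, hj, hj_min⟩ := exists_min_image (Icc k n) p ⟨k, mem_Icc.2 ⟨le_rfl, hkn⟩⟩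
  obtain ⟨hi1, hik⟩ := mem_Icc.1 hi
  obtain ⟨hkj, hjn⟩ := mem_Icc.1 hj
  have hL : ∑ x ∈ Ico 1 k, p x * ℓ x + p k * ℓa ≤ p i * (1 / 2) := hleft ▸
    sum_mul_add_mul_le (fun x hx => hℓ x (Ico_subset_Icc_self.trans (Icc_subset_Icc_right hkn) hx))
      hℓa (fun x hx => hi_max x (Ico_subset_Icc_self hx)) (hi_max k (mem_Icc.2 ⟨hk1, le_rfl⟩))
  have hR : ∑ x ∈ Ioc k n, (1 - p x) * ℓ x + (1 - p k) * ℓb ≤ (1 - p j) * (1 / 2) := hright ▸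
    sum_mul_add_mul_le (fun x hx => hℓ x (Ioc_subset_Icc_self.trans (Icc_subset_Icc_left hk1) hx))
      hℓb (fun x hx => sub_le_sub_left (hj_min x (Ioc_subset_Icc_self hx)) 1)
      (sub_le_sub_left (hj_min k (mem_Icc.2 ⟨le_rfl, hkn⟩)) 1)
  have hgap : p i - p j ≥ 1 / 2 := by linarith
  have hij : i < j := (hik.trans hkj).lt_of_ne fun h => by subst h; linarith
  exact ⟨i, j, mem_Icc.2 ⟨hi1, hik.trans hkn⟩, mem_Icc.2 ⟨hk1.trans hkj, hjn⟩, hij,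
    hgap.trans (le_abs_self _)⟩

/-- If the weighted accuracy expression is at least `3/4`, where the weights on the
two sides of the threshold bucket `k` each total `1/2`, then two of the values
`p i` must be at distance at least `1/2`. -/
theorem accuracy_forces_gap (n k : ℕ) (hk : k ∈ Finset.Icc 1 n)
    (ℓ : ℕ → ℝ) (ℓa ℓb : ℝ)
    (hℓ : ∀ i ∈ Finset.Icc 1 n, 0 ≤ ℓ i) (hℓa : 0 ≤ ℓa) (hℓb : 0 ≤ ℓb)
    (hleft : (∑ i ∈ Finset.Ico 1 k, ℓ i) + ℓa = 1 / 2)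
    (hright : (∑ i ∈ Finset.Ioc k n, ℓ i) + ℓb = 1 / 2)
    (p : ℕ → ℝ) (hp : ∀ i ∈ Finset.Icc 1 n, p i ∈ Set.Icc (0 : ℝ) 1)
    (hacc : (∑ i ∈ Finset.Ico 1 k, p i * ℓ i) +
        (∑ i ∈ Finset.Ioc k n, (1 - p i) * ℓ i) +
        p k * ℓa + (1 - p k) * ℓb ≥ 3 / 4) :
    ∃ i j, i ∈ Finset.Icc 1 n ∧ j ∈ Finset.Icc 1 n ∧ i < j ∧
      |p i - p j| ≥ 1 / 2 :=
  accuracy_forces_gap_general n k hk ℓ ℓa ℓb hℓ hℓa hℓb hleft hright p hacc
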